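/- arXiv:2305.08460 — 2 statements merged into one kernel-verified Lean document; each statement's English description precedes it below -/
import Mathlib

section
/- Hypergeometric-type tail bound with adaptive lower-bounded success probability: consider an urn with n balls of which pn are black, and draw k ≤ n balls without replacement; let X be the number of black balls drawn. Then for every 0 < δ < 1, Pr(X < (1−δ)pk − p) < k·exp(−δ²pk/2). -/
/-!
Let `X_t` count the black balls among the first `t` draws and fix `z ∈ [0, 1]`. The undrawn
positions are exchangeable given the first `t` draws, so under any weight depending on `X_t` the
`t`-th draw is black with the weighted mean of `(|B| - X_t) / (n - t)`. For the weight `z ^ X_t`,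
which decreases in `X_t`, Chebyshev's sum inequality bounds the weighted mean of `X_t` by the plain
mean `t |B| / n`. Hence `E[z ^ X_{t+1}] ≤ (1 - (1 - z) |B| / n) E[z ^ X_t]`: the hypergeometric
moment generating function is dominated by the binomial one, and Markov's inequality for `z ^ X`
with `z = 1 - δ` plus the usual Chernoff estimates finish the proof.
-/

open Finset
open scoped Nat

lemma Fin.card_filter_le_val (n t : ℕ) : #{i : Fin n | t ≤ (i : ℕ)} = n - t := by
  have h := card_filter_add_card_filter_not (s := univ) (fun i : Fin n => (i : ℕ) < t)
  simp only [Fin.card_filter_val_lt, not_lt, card_univ, Fintype.card_fin] at h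
  omega

lemma card_filter_lt_mul_rpow_le_sum {α : Type*} (s : Finset α) (f : α → ℕ) {z : ℝ}
    (hz0 : 0 < z) (hz1 : z ≤ 1) (T : ℝ) :
    #{a ∈ s | (f a : ℝ) < T} * z ^ T ≤ ∑ a ∈ s, z ^ f a := by
  calc #{a ∈ s | (f a : ℝ) < T} * z ^ T = ∑ a ∈ s with (f a : ℝ) < T, z ^ T := by
        rw [sum_const, nsmul_eq_mul]
    _ ≤ ∑ a ∈ s with (f a : ℝ) < T, z ^ f a := sum_le_sum fun a ha => by
        rw [← Real.rpow_natCast]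
        exact Real.rpow_le_rpow_of_exponent_ge hz0 hz1 (mem_filter.1 ha).2.le
    _ ≤ ∑ a ∈ s, z ^ f a :=
        sum_le_sum_of_subset_of_nonneg (filter_subset _ _) fun _ _ _ => by positivity

lemma PMF.toOuterMeasure_uniformOfFintype_setOf {α : Type*} [Fintype α] [Nonempty α]
    (P : α → Prop) [DecidablePred P] :
    (PMF.uniformOfFintype α).toOuterMeasure {a | P a}
      = ENNReal.ofReal (#{a | P a} / Fintype.card α) := by
  rw [PMF.toOuterMeasure_uniformOfFintype_apply, ENNReal.ofReal_div_of_pos (by positivity),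
    ENNReal.ofReal_natCast, ENNReal.ofReal_natCast]
  simp [Fintype.card_subtype]

open Real in
lemma neg_add_sq_div_two_le_one_sub_mul_log {δ : ℝ} (h0 : 0 ≤ δ) (h1 : δ < 1) :
    -δ + δ ^ 2 / 2 ≤ (1 - δ) * log (1 - δ) := by
  set t := 1 - δ
  have ht : 0 < t := by linarith
  have hs : -log t ≤ sinh (-log t) :=
    self_le_sinh_iff.2 (neg_nonneg.2 (log_nonpos ht.le (by linarith)))
  -- `s ≤ sinh s` at `s = -log t` reads `-log t ≤ (t⁻¹ - t) / 2`; multiply by `t`.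
  rw [sinh_eq, neg_neg, exp_log ht, exp_neg, exp_log ht] at hs
  have hinv : t * t⁻¹ = 1 := mul_inv_cancel₀ ht.ne'
  nlinarith [mul_le_mul_of_nonneg_left hs ht.le]

open Real in
lemma one_sub_mul_pow_le_exp_mul_rpow {δ p : ℝ} (h0 : 0 ≤ δ) (h1 : δ < 1) (hp : 0 ≤ p)
    (hδp : δ * p < 1) (k : ℕ) :
    (1 - δ * p) ^ k ≤ exp (-(δ ^ 2) * p * k / 2) * (1 - δ) ^ ((1 - δ) * p * k) := by
  calc (1 - δ * p) ^ k ≤ exp (-(δ * p)) ^ k :=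
        pow_le_pow_left₀ (by linarith) (by linarith [add_one_le_exp (-(δ * p))]) k
    _ = exp (-(δ ^ 2) * p * k / 2 + p * k * (-δ + δ ^ 2 / 2)) := by
        rw [← exp_nat_mul]; ring_nf
    _ ≤ exp (-(δ ^ 2) * p * k / 2 + p * k * ((1 - δ) * log (1 - δ))) := by
        gcongr; exact neg_add_sq_div_two_le_one_sub_mul_log h0 h1
    _ = exp (-(δ ^ 2) * p * k / 2) * (1 - δ) ^ ((1 - δ) * p * k) := by
        rw [exp_add, rpow_def_of_pos (by linarith)]; ring_nf

section Urn

variable {n : ℕ} (B : Finset (Fin n))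

def blackCount (σ : Equiv.Perm (Fin n)) (t : ℕ) : ℕ := #{i : Fin n | (i : ℕ) < t ∧ σ i ∈ B}

variable {B}

lemma blackCount_zero (σ : Equiv.Perm (Fin n)) : blackCount B σ 0 = 0 := by
  simp [blackCount]

lemma blackCount_succ (σ : Equiv.Perm (Fin n)) {t : ℕ} (ht : t < n) :
    blackCount B σ (t + 1) = blackCount B σ t + if σ ⟨t, ht⟩ ∈ B then 1 else 0 := by
  have hsplit : univ.filter (fun i : Fin n => (i : ℕ) < t + 1 ∧ σ i ∈ B)
      = univ.filter (fun i : Fin n => (i : ℕ) < t ∧ σ i ∈ B)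
        ∪ univ.filter (fun i : Fin n => i = ⟨t, ht⟩ ∧ σ i ∈ B) := by
    ext i; simp [Fin.ext_iff, ← or_and_right, Nat.le_iff_lt_or_eq]
  rw [blackCount, blackCount, hsplit, card_union_of_disjoint]
  · congr 1; split_ifs with h <;> simp [filter_and, filter_eq', h]
  · rw [disjoint_filter]; rintro i - ⟨hi, -⟩ ⟨rfl, -⟩; simp at hi

lemma blackCount_add_card_filter_le (σ : Equiv.Perm (Fin n)) (t : ℕ) :
    blackCount B σ t + #{i : Fin n | t ≤ (i : ℕ) ∧ σ i ∈ B} = #B := by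
  have hB : #{i : Fin n | σ i ∈ B} = #B := by
    rw [← card_map σ.toEmbedding]; congr 1; ext b; simp
  rw [blackCount, ← hB, ← card_filter_add_card_filter_not (s := univ.filter fun i => σ i ∈ B)
    (fun i : Fin n => (i : ℕ) < t), filter_filter, filter_filter]
  simp only [not_lt, and_comm]

lemma blackCount_mul_swap (σ : Equiv.Perm (Fin n)) {t : ℕ} {i j : Fin n}
    (hi : t ≤ i) (hj : t ≤ j) : blackCount B (σ * Equiv.swap i j) t = blackCount B σ t := by
  refine congrArg card (filter_congr fun l _ => and_congr_right fun hl => ?_)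
  rw [Equiv.Perm.mul_apply, Equiv.swap_apply_of_ne_of_ne (by rintro rfl; omega)
    (by rintro rfl; omega)]

lemma sum_filter_apply_mem_congr {M : Type*} [AddCommMonoid M] (h : ℕ → M) {t : ℕ}
    {i j : Fin n} (hi : t ≤ i) (hj : t ≤ j) :
    ∑ σ with σ i ∈ B, h (blackCount B σ t) = ∑ σ with σ j ∈ B, h (blackCount B σ t) := by
  rw [sum_filter, sum_filter]
  refine Fintype.sum_equiv (Equiv.mulRight (Equiv.swap i j)) _ _ fun σ => ?_
  simp [blackCount_mul_swap σ hi hj]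

lemma sub_mul_sum_filter_apply_mem (h : ℕ → ℝ) {t : ℕ} (ht : t < n) :
    ((n : ℝ) - t) * ∑ σ with σ ⟨t, ht⟩ ∈ B, h (blackCount B σ t)
      = ∑ σ, h (blackCount B σ t) * (#B - blackCount B σ t) := by
  calc ((n : ℝ) - t) * ∑ σ with σ ⟨t, ht⟩ ∈ B, h (blackCount B σ t)
      = ∑ i ∈ univ.filter (fun i : Fin n => t ≤ (i : ℕ)),
          ∑ σ with σ i ∈ B, h (blackCount B σ t) := by
        rw [← Nat.cast_sub ht.le, ← Fin.card_filter_le_val, ← nsmul_eq_mul, ← sum_const]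
        exact sum_congr rfl fun i hi => sum_filter_apply_mem_congr h le_rfl (mem_filter.1 hi).2
    _ = ∑ σ, h (blackCount B σ t) * #{i : Fin n | t ≤ (i : ℕ) ∧ σ i ∈ B} := by
        rw [sum_comm' (t' := univ)
          (s' := fun σ => univ.filter fun i : Fin n => t ≤ (i : ℕ) ∧ σ i ∈ B) (by simp)]
        simp [mul_comm]
    _ = _ := by
        refine sum_congr rfl fun σ _ => ?_
        rw [← blackCount_add_card_filter_le (B := B) σ t]; push_cast; ring

lemma card_mul_card_filter_apply_mem (i : Fin n) :
    (n : ℝ) * #{σ : Equiv.Perm (Fin n) | σ i ∈ B} = n ! * #B := by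
  have h := sub_mul_sum_filter_apply_mem (B := B) (fun _ => 1) (t := 0) i.pos
  have hi := sum_filter_apply_mem_congr (B := B) (fun _ => (1 : ℝ))
    (Nat.zero_le (⟨0, i.pos⟩ : Fin n)) (Nat.zero_le i)
  rw [hi] at h
  simpa [blackCount_zero, Fintype.card_perm] using h

lemma card_mul_sum_blackCount {t : ℕ} (ht : t ≤ n) :
    (n : ℝ) * ∑ σ, (blackCount B σ t : ℝ) = t * n ! * #B := by
  induction t with
  | zero => simp [blackCount_zero]
  | succ t ih =>
    have hsum : ∑ σ, (blackCount B σ (t + 1) : ℝ)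
        = ∑ σ, (blackCount B σ t : ℝ) + #{σ : Equiv.Perm (Fin n) | σ ⟨t, ht⟩ ∈ B} := by
      simp [blackCount_succ _ ht, sum_add_distrib, sum_boole]
    rw [hsum, mul_add, ih (by omega), card_mul_card_filter_apply_mem]
    push_cast; ring

lemma card_mul_sum_pow_mul_blackCount_le {z : ℝ} (hz0 : 0 ≤ z) (hz1 : z ≤ 1) {t : ℕ}
    (ht : t ≤ n) :
    (n : ℝ) * ∑ σ, z ^ blackCount B σ t * blackCount B σ t
      ≤ t * #B * ∑ σ, z ^ blackCount B σ t := by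
  have hanti : Antivary (fun σ => z ^ blackCount B σ t) (fun σ => (blackCount B σ t : ℝ)) :=
    fun σ τ hlt => pow_le_pow_of_le_one hz0 hz1 (by simp only at hlt; exact_mod_cast hlt.le)
  have hcheb := hanti.card_mul_sum_le_sum_mul_sum
  rw [Fintype.card_perm, Fintype.card_fin] at hcheb
  have hfact : (0 : ℝ) < n ! := by positivity
  have hmean := card_mul_sum_blackCount (B := B) ht
  refine le_of_mul_le_mul_left ?_ hfact
  calc (n ! : ℝ) * ((n : ℝ) * ∑ σ, z ^ blackCount B σ t * blackCount B σ t)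
      = n * ((n ! : ℝ) * ∑ σ, z ^ blackCount B σ t * blackCount B σ t) := by ring
    _ ≤ n * ((∑ σ, z ^ blackCount B σ t) * ∑ σ, (blackCount B σ t : ℝ)) := by gcongr
    _ = n ! * (t * #B * ∑ σ, z ^ blackCount B σ t) := by
        linear_combination (∑ σ, z ^ blackCount B σ t) * hmean

lemma mul_sum_pow_blackCount_le_sum_filter {z : ℝ} (hz0 : 0 ≤ z) (hz1 : z ≤ 1) {t : ℕ}
    (ht : t < n) :
    #B / n * ∑ σ, z ^ blackCount B σ t ≤ ∑ σ with σ ⟨t, ht⟩ ∈ B, z ^ blackCount B σ t := by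
  have hnt : (0 : ℝ) < n - t := by rw [sub_pos]; exact_mod_cast ht
  have hn : (0 : ℝ) < n := Nat.cast_pos.2 (by omega)
  have hcount := sub_mul_sum_filter_apply_mem (B := B) (z ^ ·) ht
  have hcheb := card_mul_sum_pow_mul_blackCount_le (B := B) hz0 hz1 ht.le
  simp only [mul_sub, sum_sub_distrib, ← sum_mul] at hcount
  set S := ∑ σ, z ^ blackCount B σ t
  set C := ∑ σ, z ^ blackCount B σ t * blackCount B σ t
  refine le_of_mul_le_mul_left ?_ hnt
  have hC : C ≤ t * #B * S / n := by rw [le_div_iff₀ hn]; linarith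
  calc ((n : ℝ) - t) * (#B / n * S) = S * #B - t * #B * S / n := by field_simp
    _ ≤ S * #B - C := by linarith
    _ = _ := hcount.symm

theorem sum_pow_blackCount_le {z : ℝ} (hz0 : 0 ≤ z) (hz1 : z ≤ 1) {t : ℕ} (ht : t ≤ n) :
    ∑ σ, z ^ blackCount B σ t ≤ n ! * (1 - (1 - z) * #B / n) ^ t := by
  induction t with
  | zero => simp [blackCount_zero, Fintype.card_perm]
  | succ t ih =>
    have htn : t < n := ht
    have hstep : ∑ σ, z ^ blackCount B σ (t + 1) = ∑ σ, z ^ blackCount B σ t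
        - (1 - z) * ∑ σ with σ ⟨t, htn⟩ ∈ B, z ^ blackCount B σ t := by
      rw [sum_filter, mul_sum, ← sum_sub_distrib]
      refine sum_congr rfl fun σ _ => ?_
      rw [blackCount_succ σ htn]
      split_ifs <;> ring
    have hratio : 0 ≤ 1 - (1 - z) * #B / n := by
      have hM : (#B : ℝ) ≤ n := by exact_mod_cast (card_le_univ B).trans_eq (Fintype.card_fin n)
      rw [sub_nonneg, div_le_one (Nat.cast_pos.2 (by omega))]
      nlinarith
    calc ∑ σ, z ^ blackCount B σ (t + 1)
        ≤ (1 - (1 - z) * #B / n) * ∑ σ, z ^ blackCount B σ t := by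
          rw [hstep]
          linear_combination mul_le_mul_of_nonneg_left
            (mul_sum_pow_blackCount_le_sum_filter (B := B) hz0 hz1 htn) (sub_nonneg.2 hz1)
      _ ≤ (1 - (1 - z) * #B / n) * (n ! * (1 - (1 - z) * #B / n) ^ t) := by
          gcongr; exact ih htn.le
      _ = _ := by ring

lemma card_filter_castLE_eq_blackCount {k : ℕ} (hkn : k ≤ n) (σ : Equiv.Perm (Fin n)) :
    #{i : Fin k | σ (Fin.castLE hkn i) ∈ B} = blackCount B σ k := by
  refine card_nbij (Fin.castLE hkn) (fun i hi => ?_) (Fin.castLE_injective hkn).injOn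
    fun j hj => ?_
  · simp only [coe_filter, mem_univ, true_and, Set.mem_ofPred_eq] at hi ⊢
    exact ⟨i.isLt, hi⟩
  · simp only [coe_filter, mem_univ, true_and, Set.mem_ofPred_eq] at hj
    exact ⟨⟨j, hj.1⟩, by simpa using hj.2, rfl⟩

lemma card_filter_blackCount_lt_le {k : ℕ} (hkn : k ≤ n) (hn : 0 < n) {p δ : ℝ} (hp : 0 ≤ p)
    (hδ0 : 0 ≤ δ) (hδ1 : δ < 1) (hδp : δ * p < 1) (hB : (#B : ℝ) = p * n) :
    #{σ : Equiv.Perm (Fin n) | (blackCount B σ k : ℝ) < (1 - δ) * p * k - p}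
      ≤ n ! * Real.exp (-(δ ^ 2) * p * k / 2) * (1 - δ) ^ p := by
  have hz0 : 0 < 1 - δ := by linarith
  have hmgf := sum_pow_blackCount_le (B := B) hz0.le (by linarith) hkn
  rw [hB, show 1 - (1 - (1 - δ)) * (p * n) / n = 1 - δ * p by field_simp; ring] at hmgf
  have hmarkov := card_filter_lt_mul_rpow_le_sum univ (blackCount B · k) hz0 (by linarith)
    ((1 - δ) * p * k - p)
  have hchernoff := one_sub_mul_pow_le_exp_mul_rpow hδ0 hδ1 hp hδp k
  rw [show (1 - δ) * p * k = ((1 - δ) * p * k - p) + p by ring, Real.rpow_add hz0] at hchernoff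
  refine le_of_mul_le_mul_right ?_ (Real.rpow_pos_of_pos hz0 ((1 - δ) * p * k - p))
  calc _ ≤ ∑ σ, (1 - δ) ^ blackCount B σ k := hmarkov
    _ ≤ n ! * (1 - δ * p) ^ k := hmgf
    _ ≤ n ! * (Real.exp (-(δ ^ 2) * p * k / 2)
          * ((1 - δ) ^ ((1 - δ) * p * k - p) * (1 - δ) ^ p)) := by gcongr
    _ = _ := by ring

end Urn

/-- Hypergeometric-type tail bound: an urn contains `n` balls of which `pn`
are black (the set `B`); we draw `k ≤ n` balls without replacement (the first
`k` values of a uniformly random permutation), and `X` counts the black balls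
drawn.  Then for `0 < δ < 1`, `Pr(X < (1−δ)pk − p) < k·exp(−δ²pk/2)`. -/
theorem hypergeometric_tail_bound
    (n k : ℕ) (hk : 0 < k) (hkn : k ≤ n)
    (p δ : ℝ) (hp0 : 0 < p) (hp1 : p < 1) (hδ0 : 0 < δ) (hδ1 : δ < 1)
    (B : Finset (Fin n)) (hB : (B.card : ℝ) = p * n) :
    ((PMF.uniformOfFintype (Equiv.Perm (Fin n))).toOuterMeasure
        {σ | ((Finset.univ.filter
                fun i : Fin k => σ (Fin.castLE hkn i) ∈ B).card : ℝ)
              < (1 - δ) * p * k - p})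
      < ENNReal.ofReal ((k : ℝ) * Real.exp (-(δ ^ 2) * p * k / 2)) := by
  simp_rw [card_filter_castLE_eq_blackCount hkn]
  rw [PMF.toOuterMeasure_uniformOfFintype_setOf, Fintype.card_perm, Fintype.card_fin,
    ENNReal.ofReal_lt_ofReal_iff (by positivity), div_lt_iff₀ (by positivity)]
  set E := Real.exp (-(δ ^ 2) * p * k / 2)
  calc _ ≤ n ! * E * (1 - δ) ^ p :=
        card_filter_blackCount_lt_le hkn (hk.trans_le hkn) hp0.le hδ0.le hδ1 (by nlinarith) hB
    _ < n ! * E * 1 := by gcongr; exact Real.rpow_lt_one (by linarith) (by linarith) hp0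
    _ = 1 * E * n ! := by ring
    _ ≤ k * E * n ! := by gcongr; exact_mod_cast hk
end

section
/- Lower bound for median computation in the comparison model: if n is odd and two designated agents a_1, a_2 hold the median key and its immediate successor, then conditioned on a_1 and a_2 not yet having interacted with each other, the distribution of the sequence of all agents' states is identical whether a_1 holds the median or a_2 does; moreover the expected number of uniformly random ordered pairwise interactions until a_1 and a_2 first interact is n(n−1)/2, which is Ω(n²). Hence any protocol correctly identifying the median requires Ω(n²) expected interactions (Ω(n) parallel time). -/
/-- Execution of a comparison-based population protocol: agents hold hidden keys
`κ`, the scheduler chooses the ordered pair `w t` at step `t`, and the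
transition function `δ` may use only the two interacting agents' states and the
comparison outcome of their keys. -/
def runConfig {S : Type*} {n : ℕ} (δ : S → S → Bool → S × S)
    (κ : Fin n → ℕ) (w : ℕ → Fin n × Fin n) (c0 : Fin n → S) : ℕ → Fin n → S
  | 0 => c0
  | t + 1 =>
    let c := runConfig δ κ w c0 t
    let i := (w t).1
    let j := (w t).2
    Function.update (Function.update c i (δ (c i) (c j) (decide (κ i < κ j))).1)
      j (δ (c i) (c j) (decide (κ i < κ j))).2

/-- Lower bound for median computation in the comparison model.  If agents
`a₁, a₂` hold the median and its immediate successor (so no other key lies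
between theirs), then as long as `a₁` and `a₂` have not interacted with each
other, the sequence of all agents' states is identical whether `a₁` holds the
median or `a₂` does (i.e. under swapping their keys); moreover the expected
number of uniformly random ordered interactions until `a₁` and `a₂` first
interact is `n(n−1)/2 = Ω(n²)`. -/
theorem median_lower_bound_comparison_model
    {S : Type*} {n : ℕ} (hn : 2 ≤ n) (hodd : Odd n)
    (δ : S → S → Bool → S × S) (c0 : Fin n → S)
    (κ : Fin n → ℕ) (hκinj : Function.Injective κ)
    (a1 a2 : Fin n) (ha : a1 ≠ a2)
    (hadj : ∀ k : Fin n, k ≠ a1 → k ≠ a2 → (κ k < κ a1 ↔ κ k < κ a2))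
    (w : ℕ → Fin n × Fin n) (T : ℕ)
    (hw : ∀ t < T, ¬(w t = (a1, a2) ∨ w t = (a2, a1))) :
    (∀ t ≤ T, runConfig δ κ w c0 t = runConfig δ (κ ∘ Equiv.swap a1 a2) w c0 t)
    ∧ (∑' k : ℕ, ((k : ℝ) + 1) * (1 - 2 / ((n : ℝ) * ((n : ℝ) - 1))) ^ k *
          (2 / ((n : ℝ) * ((n : ℝ) - 1)))) = (n : ℝ) * ((n : ℝ) - 1) / 2
    ∧ (n : ℝ) ^ 2 / 4 ≤ (n : ℝ) * ((n : ℝ) - 1) / 2 := by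
  have hn3 : 3 ≤ n := by
    rcases hodd with ⟨m, hm⟩; omega
  refine ⟨?_, ?_, ?_⟩
  · -- Part 1: indistinguishability before a1 and a2 interact
    have hne : ∀ x y : Fin n, x ≠ y → κ x ≠ κ y := fun x y hxy h => hxy (hκinj h)
    have key : ∀ i j : Fin n, ¬((i, j) = (a1, a2) ∨ (i, j) = (a2, a1)) →
        ((κ ∘ Equiv.swap a1 a2) i < (κ ∘ Equiv.swap a1 a2) j ↔ κ i < κ j) := by
      intro i j hij
      push_neg at hij
      obtain ⟨h12, h21⟩ := hij
      simp only [Function.comp_apply]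
      by_cases hi1 : i = a1
      · by_cases hj1 : j = a1
        · rw [hi1, hj1]; omega
        · by_cases hj2 : j = a2
          · exact absurd (by rw [hi1, hj2]) h12
          · rw [hi1, Equiv.swap_apply_left, Equiv.swap_apply_of_ne_of_ne hj1 hj2]
            have h := hadj j hj1 hj2
            have n1 := hne j a1 hj1
            have n2 := hne j a2 hj2
            omega
      · by_cases hi2 : i = a2
        · by_cases hj2 : j = a2
          · rw [hi2, hj2]; omega
          · by_cases hj1 : j = a1
            · exact absurd (by rw [hi2, hj1]) h21
            · rw [hi2, Equiv.swap_apply_right, Equiv.swap_apply_of_ne_of_ne hj1 hj2]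
              have h := hadj j hj1 hj2
              have n1 := hne j a1 hj1
              have n2 := hne j a2 hj2
              omega
        · rw [Equiv.swap_apply_of_ne_of_ne hi1 hi2]
          by_cases hj1 : j = a1
          · rw [hj1, Equiv.swap_apply_left]
            have h := hadj i hi1 hi2
            omega
          · by_cases hj2 : j = a2
            · rw [hj2, Equiv.swap_apply_right]
              have h := hadj i hi1 hi2
              omega
            · rw [Equiv.swap_apply_of_ne_of_ne hj1 hj2]
    intro t
    induction t with
    | zero => intro _; rfl
    | succ t ih =>
      intro ht
      have hc := ih (Nat.le_of_succ_le ht)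
      have hwt := hw t (Nat.lt_of_succ_le ht)
      have hk := key (w t).1 (w t).2 (by simpa using hwt)
      simp only [runConfig, ← hc, hk]
  · -- Part 2: expected waiting time of a geometric distribution
    have hn' : (3 : ℝ) ≤ n := by exact_mod_cast hn3
    set p : ℝ := 2 / ((n : ℝ) * ((n : ℝ) - 1)) with hp
    have hden : (6 : ℝ) ≤ (n : ℝ) * ((n : ℝ) - 1) := by nlinarith
    have hppos : 0 < p := by positivity
    have hple : p ≤ 1 / 3 := by
      rw [hp, div_le_div_iff₀ (by linarith) (by norm_num)]; linarith
    set r : ℝ := 1 - p with hr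
    have hr0 : 0 ≤ r := by simp only [hr]; linarith
    have hr1 : r < 1 := by simp only [hr]; linarith
    have hnorm : ‖r‖ < 1 := by rw [Real.norm_eq_abs, abs_of_nonneg hr0]; exact hr1
    have h1 : ∑' k : ℕ, (k : ℝ) * r ^ k = r / (1 - r) ^ 2 :=
      tsum_coe_mul_geometric_of_norm_lt_one hnorm
    have h2 : ∑' k : ℕ, r ^ k = (1 - r)⁻¹ := tsum_geometric_of_lt_one hr0 hr1
    have hs1 : Summable (fun k : ℕ => (k : ℝ) * r ^ k) := by
      simpa using summable_pow_mul_geometric_of_norm_lt_one 1 hnorm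
    have hs2 : Summable (fun k : ℕ => r ^ k) := summable_geometric_of_norm_lt_one hnorm
    have hpne : p ≠ 0 := hppos.ne'
    calc ∑' k : ℕ, ((k : ℝ) + 1) * r ^ k * p
        = (∑' k : ℕ, ((k : ℝ) * r ^ k + r ^ k)) * p := by
          rw [← tsum_mul_right]; congr 1; ext k; ring
      _ = (r / (1 - r) ^ 2 + (1 - r)⁻¹) * p := by rw [Summable.tsum_add hs1 hs2, h1, h2]
      _ = 1 / p := by
          rw [hr]
          rw [show (1 : ℝ) - (1 - p) = p from by ring]
          rw [div_add' _ _ _ (pow_ne_zero 2 hpne)]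
          rw [show (1 : ℝ) - p + p⁻¹ * p ^ 2 = 1 from by field_simp; ring]
          rw [sq, div_mul_eq_mul_div, one_mul, div_mul_cancel_left₀ hpne, one_div]
      _ = (n : ℝ) * ((n : ℝ) - 1) / 2 := by rw [hp, one_div_div]
  · -- Part 3: n(n-1)/2 = Ω(n²)
    have hn' : (2 : ℝ) ≤ n := by exact_mod_cast hn
    nlinarith
end
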